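/- arXiv:1010.3216 — 5 statements merged into one kernel-verified Lean document; each statement's English description precedes it below -/
import Mathlib

section
/- Let τ₀ ∈ ℝ, let B > 1, B̃ ≥ 1 and D ≥ 0 be real constants, and let λ be a real number with 0 < λ < 1/(16·B²). Let f : [τ₀, ∞) → ℝ be continuous and nonnegative, and suppose that for all τ₀ ≤ τ₁ ≤ τ₂ one has f(τ₂) + ∫_{τ₁}^{τ₂} f(t) dt ≤ B̃·(D + f(τ₀))·max(1, τ₂ − τ₁) + λ·max(1, τ₂ − τ₁)·sup_{τ ∈ [τ₁, τ₂]} f(τ) + B·f(τ₁). Then sup_{τ ≥ τ₀} f(τ) ≤ C, where C = 2·B·f(τ₀) + 72·B²·B̃·(D + f(τ₀)). -/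
/-!
Let `b` be a point where `f` attains its maximum `M` over `[τ₀, τ]`, and apply the estimate on
`[a, b]` with `b - a ≤ L := 4B²`: since `λL ≤ 1/2`, the supremum term costs at most `M/2`.
If `b` is within `L` of `τ₀`, take `a = τ₀`. Otherwise take `a = b - L`: either `f` drops below
`M/(4B)` somewhere on `[b - L, b]`, and starting there bounds `M`, or it does not, and then the
integral term alone is at least `L·M/(4B) = BM`, which absorbs `B·f(a)`.
-/

open Set

def EnergyEstimate (f : ℝ → ℝ) (τ₀ A lam B : ℝ) : Prop :=
  ∀ τ₁ τ₂, τ₀ ≤ τ₁ → τ₁ ≤ τ₂ →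
    f τ₂ + ∫ t in τ₁..τ₂, f t ≤
      A * max 1 (τ₂ - τ₁) + lam * max 1 (τ₂ - τ₁) * sSup (f '' Icc τ₁ τ₂) + B * f τ₁

namespace EnergyEstimate

variable {f : ℝ → ℝ} {τ₀ A lam B L a b : ℝ}

theorem add_integral_le_of_isMaxOn (hest : EnergyEstimate f τ₀ A lam B) (hA : 0 ≤ A)
    (hlam : 0 ≤ lam) (hL : 1 ≤ L) (hlamL : lam * L ≤ 1 / 2) (ha : τ₀ ≤ a) (hab : a ≤ b)
    (hbaL : b - a ≤ L) (hmax : IsMaxOn f (Icc a b) b) (hfb : 0 ≤ f b) :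
    f b + ∫ t in a..b, f t ≤ A * L + f b / 2 + B * f a := by
  have hlen : max 1 (b - a) ≤ L := max_le hL hbaL
  have hsup : sSup (f '' Icc a b) ≤ f b :=
    csSup_le ((nonempty_Icc.2 hab).image f) (forall_mem_image.2 fun _ ht => hmax ht)
  calc f b + ∫ t in a..b, f t
      ≤ A * max 1 (b - a) + lam * max 1 (b - a) * sSup (f '' Icc a b) + B * f a :=
        hest a b ha hab
    _ ≤ A * L + lam * max 1 (b - a) * f b + B * f a := by gcongr
    _ ≤ A * L + lam * L * f b + B * f a := by gcongr
    _ ≤ A * L + f b / 2 + B * f a := by nlinarith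

theorem le_of_isMaxOn_of_near (hest : EnergyEstimate f τ₀ A lam B)
    (hf_nonneg : ∀ τ ∈ Ici τ₀, 0 ≤ f τ) (hA : 0 ≤ A) (hlam : 0 ≤ lam) (hL : 1 ≤ L)
    (hlamL : lam * L ≤ 1 / 2) (hb : τ₀ ≤ b) (hbL : b - τ₀ ≤ L) (hmax : IsMaxOn f (Icc τ₀ b) b) :
    f b ≤ 2 * (A * L) + 2 * B * f τ₀ := by
  have hI : 0 ≤ ∫ t in τ₀..b, f t :=
    intervalIntegral.integral_nonneg hb fun t ht => hf_nonneg t ht.1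
  have := hest.add_integral_le_of_isMaxOn hA hlam hL hlamL le_rfl hb hbL hmax (hf_nonneg b hb)
  linarith

theorem le_of_isMaxOn_of_far (hest : EnergyEstimate f τ₀ A lam B)
    (hf_cont : ContinuousOn f (Ici τ₀)) (hf_nonneg : ∀ τ ∈ Ici τ₀, 0 ≤ f τ) (hA : 0 ≤ A)
    (hlam : 0 ≤ lam) (hB : 0 < B) (hL : 1 ≤ L) (hBL : 4 * B ^ 2 ≤ L) (hlamL : lam * L ≤ 1 / 2)
    (hbL : τ₀ + L ≤ b) (hmax : IsMaxOn f (Icc (b - L) b) b) :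
    f b ≤ 4 * (A * L) := by
  have ha : τ₀ ≤ b - L := by linarith
  have hab : b - L ≤ b := by linarith
  have hfb : 0 ≤ f b := hf_nonneg b (by simp only [mem_Ici]; linarith)
  by_cases hdip : ∃ s ∈ Icc (b - L) b, f s < f b / (4 * B)
  · obtain ⟨s, hs, hfs⟩ := hdip
    have hI : 0 ≤ ∫ t in s..b, f t :=
      intervalIntegral.integral_nonneg hs.2 fun t ht => hf_nonneg t (ha.trans (hs.1.trans ht.1))
    have := hest.add_integral_le_of_isMaxOn hA hlam hL hlamL (ha.trans hs.1) hs.2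
      (by linarith [hs.1]) (hmax.on_subset (Icc_subset_Icc_left hs.1)) hfb
    have hBfs : B * f s ≤ f b / 4 := by
      calc B * f s ≤ B * (f b / (4 * B)) := by gcongr
        _ = f b / 4 := by field_simp
    linarith
  · push Not at hdip
    have hsub : uIcc (b - L) b ⊆ Ici τ₀ := by
      rw [uIcc_of_le hab]
      exact Icc_subset_Ici_self.trans (Ici_subset_Ici.2 ha)
    have hint : IntervalIntegrable f MeasureTheory.volume (b - L) b :=
      (hf_cont.mono hsub).intervalIntegrable
    have hI : B * f b ≤ ∫ t in (b - L)..b, f t :=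
      calc B * f b ≤ L * (f b / (4 * B)) := by
            rw [mul_div_assoc', le_div_iff₀ (by positivity)]; nlinarith
        _ = ∫ _ in (b - L)..b, f b / (4 * B) := by
            rw [intervalIntegral.integral_const, smul_eq_mul, sub_sub_cancel]
        _ ≤ ∫ t in (b - L)..b, f t :=
            intervalIntegral.integral_mono_on hab intervalIntegrable_const hint hdip
    have := hest.add_integral_le_of_isMaxOn hA hlam hL hlamL ha hab (by linarith) hmax hfb
    have hBfa : B * f (b - L) ≤ B * f b := by gcongr; exact hmax ⟨le_rfl, hab⟩
    linarith

theorem le_of_isMaxOn (hest : EnergyEstimate f τ₀ A lam B) (hf_cont : ContinuousOn f (Ici τ₀))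
    (hf_nonneg : ∀ τ ∈ Ici τ₀, 0 ≤ f τ) (hA : 0 ≤ A) (hlam : 0 ≤ lam) (hB : 0 < B)
    (hL : 1 ≤ L) (hBL : 4 * B ^ 2 ≤ L) (hlamL : lam * L ≤ 1 / 2) (hb : τ₀ ≤ b)
    (hmax : IsMaxOn f (Icc τ₀ b) b) :
    f b ≤ 2 * B * f τ₀ + 4 * (A * L) := by
  have hBf₀ : 0 ≤ B * f τ₀ := mul_nonneg hB.le (hf_nonneg τ₀ self_mem_Ici)
  rcases le_or_gt (b - τ₀) L with hnear | hfar
  · have := hest.le_of_isMaxOn_of_near hf_nonneg hA hlam hL hlamL hb hnear hmax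
    nlinarith
  · have := hest.le_of_isMaxOn_of_far hf_cont hf_nonneg hA hlam hB hL hBL hlamL (by linarith)
      (hmax.on_subset (Icc_subset_Icc_left (by linarith)))
    linarith

end EnergyEstimate

/-- **Boundedness bootstrap lemma** (Lemma 10.2 of the paper).
If a continuous nonnegative energy `f` satisfies, on every interval
`[τ₁, τ₂] ⊆ [τ₀, ∞)`, an estimate whose right hand side grows linearly in the
interval length and contains a small multiple of the supremum of the energy,
then `f` is uniformly bounded by
`C = 2·B·f(τ₀) + 72·B²·B̃·(D + f(τ₀))`. -/
theorem boundedness_bootstrap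
    (τ₀ B Btil D lam : ℝ)
    (hB : 1 < B) (hBtil : 1 ≤ Btil) (hD : 0 ≤ D)
    (hlam0 : 0 < lam) (hlam : lam < 1 / (16 * B ^ 2))
    (f : ℝ → ℝ)
    (hf_cont : ContinuousOn f (Set.Ici τ₀))
    (hf_nonneg : ∀ τ ∈ Set.Ici τ₀, 0 ≤ f τ)
    (hest : ∀ τ₁ τ₂, τ₀ ≤ τ₁ → τ₁ ≤ τ₂ →
      f τ₂ + ∫ t in τ₁..τ₂, f t ≤
        Btil * (D + f τ₀) * max 1 (τ₂ - τ₁)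
          + lam * max 1 (τ₂ - τ₁) * sSup (f '' Set.Icc τ₁ τ₂)
          + B * f τ₁) :
    ∀ τ, τ₀ ≤ τ → f τ ≤ 2 * B * f τ₀ + 72 * B ^ 2 * Btil * (D + f τ₀) := by
  intro τ hτ
  have hA : 0 ≤ Btil * (D + f τ₀) := by
    have := hf_nonneg τ₀ self_mem_Ici
    positivity
  have hlamL : lam * (4 * B ^ 2) ≤ 1 / 2 := by
    rw [lt_div_iff₀ (by positivity)] at hlam
    linarith
  obtain ⟨b, hb, hmax⟩ :=
    isCompact_Icc.exists_isMaxOn (nonempty_Icc.2 hτ) (hf_cont.mono Icc_subset_Ici_self)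
  have hfb := EnergyEstimate.le_of_isMaxOn hest hf_cont hf_nonneg hA hlam0.le (by linarith)
    (by nlinarith) le_rfl hlamL hb.1 (hmax.on_subset (Icc_subset_Icc_right hb.2))
  calc f τ ≤ f b := hmax ⟨hτ, le_rfl⟩
    _ ≤ 2 * B * f τ₀ + 4 * (Btil * (D + f τ₀) * (4 * B ^ 2)) := hfb
    _ ≤ 2 * B * f τ₀ + 72 * B ^ 2 * Btil * (D + f τ₀) := by
        nlinarith [mul_nonneg (sq_nonneg B) hA]
end

section
/- Let τ₀ > 0 and C ≥ 1. Let f : [τ₀, ∞) → ℝ be continuous and nonnegative, and suppose that for all τ₀ ≤ τ₁ ≤ τ₂ one has f(τ₂) + ∫_{τ₁}^{τ₂} f(t) dt ≤ C·f(τ₁). Then for every τ ≥ 2·τ₀ one has f(τ) ≤ 2·C³·f(τ₀)/τ. -/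
/-!
Integrating the estimate shows `∫_{τ/2}^{τ} f ≤ C² f(τ₀)`, so by the mean value theorem for
integrals `f` is at most `2 C² f(τ₀) / τ` at some point of `[τ/2, τ]`; from that point the
boundedness part of the estimate carries the bound to `τ` at the cost of one more factor `C`.
-/

open Set intervalIntegral

section EnergyEstimate

variable {f : ℝ → ℝ} {τ₀ C : ℝ}

theorem le_mul_of_energy_estimate (hf_nonneg : ∀ τ ∈ Ici τ₀, 0 ≤ f τ)
    (hest : ∀ τ₁ τ₂, τ₀ ≤ τ₁ → τ₁ ≤ τ₂ → f τ₂ + ∫ t in τ₁..τ₂, f t ≤ C * f τ₁)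
    {s t : ℝ} (hs : τ₀ ≤ s) (hst : s ≤ t) : f t ≤ C * f s := by
  have hint : 0 ≤ ∫ x in s..t, f x :=
    integral_nonneg hst fun x hx => hf_nonneg x (hs.trans hx.1)
  linarith [hest s t hs hst]

theorem integral_le_mul_of_energy_estimate (hf_nonneg : ∀ τ ∈ Ici τ₀, 0 ≤ f τ)
    (hest : ∀ τ₁ τ₂, τ₀ ≤ τ₁ → τ₁ ≤ τ₂ → f τ₂ + ∫ t in τ₁..τ₂, f t ≤ C * f τ₁)
    {s t : ℝ} (hs : τ₀ ≤ s) (hst : s ≤ t) : ∫ x in s..t, f x ≤ C * f s := by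
  have hft : 0 ≤ f t := hf_nonneg t (hs.trans hst)
  linarith [hest s t hs hst]

theorem sub_mul_le_of_energy_estimate (hf_cont : ContinuousOn f (Ici τ₀))
    (hf_nonneg : ∀ τ ∈ Ici τ₀, 0 ≤ f τ) (hC : 0 ≤ C)
    (hest : ∀ τ₁ τ₂, τ₀ ≤ τ₁ → τ₁ ≤ τ₂ → f τ₂ + ∫ t in τ₁..τ₂, f t ≤ C * f τ₁)
    {s t : ℝ} (hs : τ₀ ≤ s) (hst : s < t) : (t - s) * f t ≤ C ^ 2 * f s := by
  have hcont : ContinuousOn f (uIcc s t) := hf_cont.mono fun x hx => by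
    rw [uIcc_of_le hst.le] at hx
    exact hs.trans hx.1
  obtain ⟨c, ⟨hsc, hct⟩, hc⟩ := exists_eq_interval_average hst.ne hcont
  rw [min_eq_left hst.le] at hsc
  rw [max_eq_right hst.le] at hct
  have hfc : (t - s) * f c = ∫ x in s..t, f x := by
    rw [hc, interval_average_eq_div, mul_div_cancel₀ _ (sub_pos.2 hst).ne']
  calc (t - s) * f t ≤ (t - s) * (C * f c) := by
        gcongr
        exact le_mul_of_energy_estimate hf_nonneg hest (hs.trans hsc.le) hct.le
    _ = C * ∫ x in s..t, f x := by rw [← hfc]; ring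
    _ ≤ C * (C * f s) := by
        gcongr
        exact integral_le_mul_of_energy_estimate hf_nonneg hest hs hst.le
    _ = C ^ 2 * f s := by ring

end EnergyEstimate

/-- **Pigeonhole decay mechanism** (used in the paper in the passage from the
combined boundedness and integrated-decay estimate (13.2) to the decay
statement (14.6)): if a continuous nonnegative energy `f` satisfies
`f(τ₂) + ∫_{τ₁}^{τ₂} f ≤ C·f(τ₁)` for all `τ₀ ≤ τ₁ ≤ τ₂`, then
`f(τ) ≤ 2·C³·f(τ₀)/τ` for all `τ ≥ 2·τ₀`. -/
theorem pigeonhole_decay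
    (τ₀ C : ℝ) (hτ₀ : 0 < τ₀) (hC : 1 ≤ C)
    (f : ℝ → ℝ)
    (hf_cont : ContinuousOn f (Set.Ici τ₀))
    (hf_nonneg : ∀ τ ∈ Set.Ici τ₀, 0 ≤ f τ)
    (hest : ∀ τ₁ τ₂, τ₀ ≤ τ₁ → τ₁ ≤ τ₂ →
      f τ₂ + ∫ t in τ₁..τ₂, f t ≤ C * f τ₁) :
    ∀ τ, 2 * τ₀ ≤ τ → f τ ≤ 2 * C ^ 3 * f τ₀ / τ := by
  intro τ hτ
  have hτ_pos : 0 < τ := by linarith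
  have hhalf : τ₀ ≤ τ / 2 := by linarith
  have hslice : (τ - τ / 2) * f τ ≤ C ^ 2 * f (τ / 2) :=
    sub_mul_le_of_energy_estimate hf_cont hf_nonneg (by linarith) hest hhalf (by linarith)
  have hbound : f (τ / 2) ≤ C * f τ₀ := le_mul_of_energy_estimate hf_nonneg hest le_rfl hhalf
  rw [le_div_iff₀ hτ_pos]
  calc f τ * τ = 2 * ((τ - τ / 2) * f τ) := by ring
    _ ≤ 2 * (C ^ 2 * (C * f τ₀)) := by
        gcongr 2 * ?_
        exact hslice.trans (mul_le_mul_of_nonneg_left hbound (by positivity))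
    _ = 2 * C ^ 3 * f τ₀ := by ring
end

section
/- Let τ₀ > 0, C ≥ 1 and m ≥ 1 a natural number. Let f₀, f₁, …, f_m : [τ₀, ∞) → ℝ be continuous and nonnegative and suppose: (i) for every j ∈ {0, …, m} and all τ₀ ≤ τ₁ ≤ τ₂ one has f_j(τ₂) ≤ C·f_j(τ₁); and (ii) for every j ∈ {1, …, m} and all τ₀ ≤ τ₁ ≤ τ₂ one has ∫_{τ₁}^{τ₂} f_j(t) dt ≤ C·f_{j−1}(τ₁). Then for every τ ≥ 2^m·τ₀ one has f_m(τ) ≤ 2^{m(m+1)/2}·C^{2m+1}·f₀(τ₀)·τ^{−m}. -/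
/-!
Induction on the level `j`, proving `f j τ ≤ 2^{j(j+1)/2} C^{2j+1} f 0 τ₀ / τ^j` for
`τ ≥ 2^j τ₀`. For the step, the mean value theorem for integrals gives a slice `c ∈ [τ/2, τ]`
with `f (j+1) c = (2/τ) ∫_{τ/2}^{τ} f (j+1) ≤ (2C/τ) f j (τ/2)`, and forward boundedness carries
this from `c` to `τ`. Each step costs a factor `2^{j+1} C²`.
-/

open Set

theorem le_mul_div_sub_of_integral_le {g : ℝ → ℝ} {C K a b : ℝ} (hC : 0 ≤ C) (hab : a < b)
    (hg : ContinuousOn g (Icc a b)) (hbound : ∀ c ∈ Icc a b, g b ≤ C * g c)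
    (hint : ∫ t in a..b, g t ≤ K) : g b ≤ C * K / (b - a) := by
  obtain ⟨c, hc, hgc⟩ := exists_eq_interval_average hab.ne (by rwa [uIcc_of_le hab.le])
  rw [uIoo_of_le hab.le] at hc
  rw [interval_average_eq_div] at hgc
  have hba : 0 < b - a := sub_pos.mpr hab
  calc g b ≤ C * g c := hbound c (Ioo_subset_Icc_self hc)
    _ = C * ((∫ t in a..b, g t) / (b - a)) := by rw [hgc]
    _ ≤ C * (K / (b - a)) := by gcongr
    _ = C * K / (b - a) := (mul_div_assoc C K _).symm

theorem Nat.succ_mul_succ_succ_div_two (j : ℕ) :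
    (j + 1) * (j + 1 + 1) / 2 = j * (j + 1) / 2 + (j + 1) := by
  rw [show (j + 1) * (j + 1 + 1) = j * (j + 1) + (j + 1) * 2 by ring,
    Nat.add_mul_div_right _ _ two_pos]

theorem decay_iteration_general
    (τ₀ C : ℝ) (hτ₀ : 0 < τ₀) (hC : 1 ≤ C)
    (m : ℕ)
    (f : ℕ → ℝ → ℝ)
    (hf_cont : ∀ j ≤ m, ContinuousOn (f j) (Set.Ici τ₀))
    (hbound : ∀ j ≤ m, ∀ τ₁ τ₂, τ₀ ≤ τ₁ → τ₁ ≤ τ₂ → f j τ₂ ≤ C * f j τ₁)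
    (hint : ∀ j, 1 ≤ j → j ≤ m → ∀ τ₁ τ₂, τ₀ ≤ τ₁ → τ₁ ≤ τ₂ →
      (∫ t in τ₁..τ₂, f j t) ≤ C * f (j - 1) τ₁) :
    ∀ τ, 2 ^ m * τ₀ ≤ τ →
      f m τ ≤ 2 ^ (m * (m + 1) / 2) * C ^ (2 * m + 1) * f 0 τ₀ / τ ^ m := by
  have hC₀ : 0 ≤ C := zero_le_one.trans hC
  suffices ∀ j ≤ m, ∀ τ, 2 ^ j * τ₀ ≤ τ →
      f j τ ≤ 2 ^ (j * (j + 1) / 2) * C ^ (2 * j + 1) * f 0 τ₀ / τ ^ j from this m le_rfl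
  intro j
  induction j with
  | zero =>
    intro _ τ hτ
    simpa using hbound 0 m.zero_le τ₀ τ le_rfl (by simpa using hτ)
  | succ j ih =>
    intro hj τ hτ
    have hhalf : 2 ^ j * τ₀ ≤ τ / 2 := by rw [pow_succ] at hτ; linarith
    have hτ₀_half : τ₀ ≤ τ / 2 :=
      (le_mul_of_one_le_left hτ₀.le (one_le_pow₀ one_le_two)).trans hhalf
    calc f (j + 1) τ ≤ C * (C * f j (τ / 2)) / (τ - τ / 2) :=
          le_mul_div_sub_of_integral_le hC₀ (by linarith)
            ((hf_cont _ hj).mono fun c hc => hτ₀_half.trans hc.1)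
            (fun c hc => hbound _ hj c τ (hτ₀_half.trans hc.1) hc.2)
            (hint (j + 1) (Nat.le_add_left 1 j) hj (τ / 2) τ hτ₀_half (by linarith))
      _ ≤ C * (C * (2 ^ (j * (j + 1) / 2) * C ^ (2 * j + 1) * f 0 τ₀ / (τ / 2) ^ j)) /
          (τ - τ / 2) := by
          gcongr
          · linarith
          · exact ih (Nat.le_of_succ_le hj) (τ / 2) hhalf
      _ = _ := by
        rw [Nat.succ_mul_succ_succ_div_two, pow_add, div_pow]
        field_simp
        ring

/-- **Decay iteration mechanism** (the abstract mechanism behind Theorem 5.3 of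
the paper): a hierarchy of continuous nonnegative energies `f 0, …, f m` in
which each energy is uniformly bounded forward in time (up to a factor `C`)
and the time-integrated energy at each level `j ≥ 1` is controlled by the
boundary energy one level lower, yields the polynomial decay
`f m (τ) ≤ 2^{m(m+1)/2}·C^{2m+1}·f 0 (τ₀)·τ^{−m}` for `τ ≥ 2^m·τ₀`. -/
theorem decay_iteration
    (τ₀ C : ℝ) (hτ₀ : 0 < τ₀) (hC : 1 ≤ C)
    (m : ℕ) (hm : 1 ≤ m)
    (f : ℕ → ℝ → ℝ)
    (hf_cont : ∀ j ≤ m, ContinuousOn (f j) (Set.Ici τ₀))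
    (hf_nonneg : ∀ j ≤ m, ∀ τ ∈ Set.Ici τ₀, 0 ≤ f j τ)
    (hbound : ∀ j ≤ m, ∀ τ₁ τ₂, τ₀ ≤ τ₁ → τ₁ ≤ τ₂ → f j τ₂ ≤ C * f j τ₁)
    (hint : ∀ j, 1 ≤ j → j ≤ m → ∀ τ₁ τ₂, τ₀ ≤ τ₁ → τ₁ ≤ τ₂ →
      (∫ t in τ₁..τ₂, f j t) ≤ C * f (j - 1) τ₁) :
    ∀ τ, 2 ^ m * τ₀ ≤ τ →
      f m τ ≤ 2 ^ (m * (m + 1) / 2) * C ^ (2 * m + 1) * f 0 τ₀ / τ ^ m :=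
  decay_iteration_general τ₀ C hτ₀ hC m f hf_cont hbound hint
end

section
/- Let F be an antisymmetric bilinear form on Minkowski space with energy–momentum tensor Q̃[F]_{αβ} = F_{αγ}·F_β^{γ} + (⋆F)_{αγ}·(⋆F)_β^{γ}. Then for all future-directed causal vectors X, Y ∈ ℝ⁴ one has Q̃[F](X, Y) = Q̃[F]_{αβ}·X^α·Y^β ≥ 0. Moreover, if X and Y are future-directed timelike, there exists a constant c > 0 (depending only on X and Y) such that Q̃[F'](X, Y) ≥ c·Σ_{α,β} (F'_{αβ})² for every antisymmetric bilinear form F'. -/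
/-! The contraction `J_X = -Q̃[F](X, ·)^♯` satisfies the Rainich identity
`η(J_X, J_X) = I·η(X, X)` with `I = (|B|² - |E|²)² + 4(E·B)² ≥ 0`, so `J_X` is causal whenever
`X` is.
Its time component is `Q̃[F](X, e₀) = -η(J_{e₀}, X)`, which is `≥ 0` because two causal vectors
with nonnegative time components have `η ≤ 0`; applying the same fact to `J_X` and `Y` gives
`Q̃[F](X, Y) = -η(J_X, Y) ≥ 0`.
For coercivity, `X - s e₀` stays future causal for `s = -η(X, X)/(2X₀)`, and likewise `Y - t e₀`,
so bilinearity gives `Q̃[F](X, Y) ≥ s·Q̃[F](e₀, Y) ≥ s·t·Q̃[F](e₀, e₀)`, where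
`Q̃[F](e₀, e₀) = |E|² + |B|² = ½ Σ F_{αβ}²`. -/

open scoped BigOperators

namespace Paper

noncomputable section

/-- The Minkowski metric `η = diag(-1,1,1,1)` on `ℝ⁴ = (Fin 4 → ℝ)`.
Since `η` is diagonal with entries `±1`, the inverse metric `η^{μν}` has the
same components, so `η` is also used for raising indices. -/
def η (μ ν : Fin 4) : ℝ := if μ = ν then (if μ = 0 then (-1 : ℝ) else 1) else 0

/-- The Levi-Civita tensor on `Fin 4`: totally antisymmetric with
`ε 0 1 2 3 = 1` (the Vandermonde product of the indices, normalized). -/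
def ε (a b c d : Fin 4) : ℝ :=
  (((b.val : ℝ) - (a.val : ℝ)) * ((c.val : ℝ) - (a.val : ℝ)) *
    ((d.val : ℝ) - (a.val : ℝ)) * ((c.val : ℝ) - (b.val : ℝ)) *
    ((d.val : ℝ) - (b.val : ℝ)) * ((d.val : ℝ) - (c.val : ℝ))) / 12

/-- A 4-index array of reals. -/
abbrev Tensor4 := Fin 4 → Fin 4 → Fin 4 → Fin 4 → ℝ

/-- A Weyl tensor: antisymmetric in the first and second pairs of indices,
symmetric under exchange of the pairs, satisfying the first Bianchi identity,
and trace-free with respect to `η` (i.e. `η^{αγ} W_{αβγδ} = 0`). -/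
def IsWeyl (W : Tensor4) : Prop :=
  (∀ a b c d, W a b c d = - W b a c d) ∧
  (∀ a b c d, W a b c d = - W a b d c) ∧
  (∀ a b c d, W a b c d = W c d a b) ∧
  (∀ a b c d, W a b c d + W a c d b + W a d b c = 0) ∧
  (∀ b d, (∑ a : Fin 4, ∑ c : Fin 4, η a c * W a b c d) = 0)

/-- The left dual `(⋆W)_{αβγδ} = (1/2)·ε_{αβ}^{μν}·W_{μνγδ}`,
indices raised with `η`. -/
def starW (W : Tensor4) : Tensor4 := fun a b c d =>
  (1 / 2) * ∑ μ : Fin 4, ∑ ν : Fin 4, ∑ μ' : Fin 4, ∑ ν' : Fin 4,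
    ε a b μ' ν' * η μ' μ * η ν' ν * W μ ν c d

/-- The Bel–Robinson tensor
`Q[W]_{αβγδ} = W_{αργσ}·W_β{}^ρ{}_δ{}^σ + (⋆W)_{αργσ}·(⋆W)_β{}^ρ{}_δ{}^σ`. -/
def Q (W : Tensor4) : Tensor4 := fun a b c d =>
  ∑ ρ : Fin 4, ∑ σ : Fin 4, ∑ ρ' : Fin 4, ∑ σ' : Fin 4, η ρ ρ' * η σ σ' *
    (W a ρ c σ * W b ρ' d σ' + starW W a ρ c σ * starW W b ρ' d σ')


/-- The Minkowski inner product `η(X,Y)`. -/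
def mink (X Y : Fin 4 → ℝ) : ℝ := ∑ a : Fin 4, ∑ b : Fin 4, η a b * X a * Y b

/-- A future-directed causal vector: `η(X,X) ≤ 0` and `X₀ > 0`. -/
def FutureCausal (X : Fin 4 → ℝ) : Prop := mink X X ≤ 0 ∧ 0 < X 0

/-- A future-directed timelike vector: `η(X,X) < 0` and `X₀ > 0`. -/
def FutureTimelike (X : Fin 4 → ℝ) : Prop := mink X X < 0 ∧ 0 < X 0

/-- The Bel–Robinson tensor evaluated on four vectors:
`Q[W](X,Y,Z,N) = Q[W]_{αβγδ}·X^α·Y^β·Z^γ·N^δ`. -/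
def Qvec (W : Tensor4) (X Y Z N : Fin 4 → ℝ) : ℝ :=
  ∑ a : Fin 4, ∑ b : Fin 4, ∑ c : Fin 4, ∑ d : Fin 4,
    Q W a b c d * X a * Y b * Z c * N d

/-- The dual of an antisymmetric bilinear form:
`(⋆F)_{αβ} = (1/2)·ε_{αβ}^{μν}·F_{μν}`. -/
def starF (F : Fin 4 → Fin 4 → ℝ) : Fin 4 → Fin 4 → ℝ := fun a b =>
  (1 / 2) * ∑ μ : Fin 4, ∑ ν : Fin 4, ∑ μ' : Fin 4, ∑ ν' : Fin 4,
    ε a b μ' ν' * η μ' μ * η ν' ν * F μ ν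

/-- The (Maxwell) energy–momentum tensor
`Q̃[F]_{αβ} = F_{αγ}·F_β{}^γ + (⋆F)_{αγ}·(⋆F)_β{}^γ`. -/
def Qt (F : Fin 4 → Fin 4 → ℝ) : Fin 4 → Fin 4 → ℝ := fun a b =>
  ∑ c : Fin 4, ∑ c' : Fin 4, η c c' *
    (F a c * F b c' + starF F a c * starF F b c')

/-- `Q̃[F]` evaluated on two vectors: `Q̃[F](X,Y) = Q̃[F]_{αβ}·X^α·Y^β`. -/
def Qtvec (F : Fin 4 → Fin 4 → ℝ) (X Y : Fin 4 → ℝ) : ℝ :=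
  ∑ a : Fin 4, ∑ b : Fin 4, Qt F a b * X a * Y b



lemma η_comm (a b : Fin 4) : η a b = η b a := by
  unfold η
  split_ifs <;> simp_all

lemma mink_apply (X Y : Fin 4 → ℝ) :
    mink X Y = -(X 0 * Y 0) + X 1 * Y 1 + X 2 * Y 2 + X 3 * Y 3 := by
  simp [mink, Fin.sum_univ_four, η]

lemma mink_nonpos_of_causal {U V : Fin 4 → ℝ} (hU : mink U U ≤ 0) (hV : mink V V ≤ 0)
    (hU0 : 0 ≤ U 0) (hV0 : 0 ≤ V 0) : mink U V ≤ 0 := by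
  rw [mink_apply] at *
  have cauchy_schwarz : (U 1 * V 1 + U 2 * V 2 + U 3 * V 3) ^ 2 ≤
      (U 1 ^ 2 + U 2 ^ 2 + U 3 ^ 2) * (V 1 ^ 2 + V 2 ^ 2 + V 3 ^ 2) := by
    nlinarith [sq_nonneg (U 1 * V 2 - U 2 * V 1), sq_nonneg (U 1 * V 3 - U 3 * V 1),
      sq_nonneg (U 2 * V 3 - U 3 * V 2)]
  have spatial_le : (U 1 ^ 2 + U 2 ^ 2 + U 3 ^ 2) * (V 1 ^ 2 + V 2 ^ 2 + V 3 ^ 2) ≤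
      (U 0 * V 0) ^ 2 := by
    rw [mul_pow]
    exact mul_le_mul (by linarith) (by linarith) (by positivity) (by positivity)
  linarith [le_of_sq_le_sq (cauchy_schwarz.trans spatial_le) (mul_nonneg hU0 hV0)]

def e₀ : Fin 4 → ℝ := ![1, 0, 0, 0]

lemma mink_e₀_self : mink e₀ e₀ = -1 := by
  simp [mink_apply, e₀]

lemma mink_sub_smul_e₀_self (X : Fin 4 → ℝ) (s : ℝ) :
    mink (X - s • e₀) (X - s • e₀) = mink X X + 2 * s * X 0 - s ^ 2 := by
  simp only [mink_apply, e₀, Pi.sub_apply, Pi.smul_apply, smul_eq_mul, Matrix.cons_val, Fin.isValue]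
  ring

lemma starF_eq (F : Fin 4 → Fin 4 → ℝ) (hF : ∀ a b, F a b = - F b a) :
    starF F = !![0, F 2 3, -F 1 3, F 1 2;
      -F 2 3, 0, -F 0 3, F 0 2;
      F 1 3, F 0 3, 0, -F 0 1;
      -F 1 2, -F 0 2, F 0 1, 0] := by
  have hd : ∀ a, F a a = 0 := fun a => by linarith [hF a a]
  ext a b
  fin_cases a <;> fin_cases b <;>
    simp [starF, Fin.sum_univ_four, ε, η, hd, hF 1 0, hF 2 0, hF 3 0, hF 2 1, hF 3 1, hF 3 2] <;>
    ring

lemma Qt_comm (F : Fin 4 → Fin 4 → ℝ) (a b : Fin 4) : Qt F a b = Qt F b a := by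
  unfold Qt
  rw [Finset.sum_comm]
  refine Finset.sum_congr rfl fun c _ => Finset.sum_congr rfl fun c' _ => ?_
  rw [η_comm c' c]
  ring

lemma Qtvec_comm (F : Fin 4 → Fin 4 → ℝ) (X Y : Fin 4 → ℝ) : Qtvec F X Y = Qtvec F Y X := by
  unfold Qtvec
  rw [Finset.sum_comm]
  refine Finset.sum_congr rfl fun a _ => Finset.sum_congr rfl fun b _ => ?_
  rw [Qt_comm F b a]
  ring

lemma Qtvec_add_left (F : Fin 4 → Fin 4 → ℝ) (X X' Y : Fin 4 → ℝ) :
    Qtvec F (X + X') Y = Qtvec F X Y + Qtvec F X' Y := by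
  simp only [Qtvec, Pi.add_apply, mul_add, add_mul, Finset.sum_add_distrib]

lemma Qtvec_smul_left (F : Fin 4 → Fin 4 → ℝ) (s : ℝ) (X Y : Fin 4 → ℝ) :
    Qtvec F (s • X) Y = s * Qtvec F X Y := by
  simp only [Qtvec, Pi.smul_apply, smul_eq_mul, Finset.mul_sum]
  refine Finset.sum_congr rfl fun a _ => Finset.sum_congr rfl fun b _ => ?_
  ring

lemma Qtvec_e₀_e₀ (F : Fin 4 → Fin 4 → ℝ) (hF : ∀ a b, F a b = - F b a) :
    Qtvec F e₀ e₀ = (∑ a, ∑ b, F a b ^ 2) / 2 := by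
  have hd : ∀ a, F a a = 0 := fun a => by linarith [hF a a]
  simp only [Qtvec, Qt, e₀, starF_eq F hF, η, Fin.sum_univ_four, Matrix.of_apply, Matrix.cons_val,
    Fin.isValue, Fin.reduceEq, ↓reduceIte, hd, hF 1 0, hF 2 0, hF 3 0, hF 2 1, hF 3 1, hF 3 2]
  ring

def energyCurrent (F : Fin 4 → Fin 4 → ℝ) (X : Fin 4 → ℝ) : Fin 4 → ℝ :=
  fun b => -∑ a, ∑ c, η b c * Qt F a c * X a

lemma mink_energyCurrent (F : Fin 4 → Fin 4 → ℝ) (X Y : Fin 4 → ℝ) :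
    mink (energyCurrent F X) Y = -Qtvec F X Y := by
  simp only [mink, energyCurrent, Qtvec, η, Fin.sum_univ_four, Fin.isValue, Fin.reduceEq,
    ↓reduceIte]
  ring

lemma energyCurrent_zero (F : Fin 4 → Fin 4 → ℝ) (X : Fin 4 → ℝ) :
    energyCurrent F X 0 = Qtvec F X e₀ := by
  simp [energyCurrent, Qtvec, e₀, Fin.sum_univ_four, η]

/-- `(|B|² - |E|²)² + 4(E·B)²` for `E_i = F_{0i}` and `B = (F₂₃, F₃₁, F₁₂)`. -/
def fieldInvariant (F : Fin 4 → Fin 4 → ℝ) : ℝ :=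
  (F 2 3 ^ 2 + F 1 3 ^ 2 + F 1 2 ^ 2 - F 0 1 ^ 2 - F 0 2 ^ 2 - F 0 3 ^ 2) ^ 2
    + 4 * (F 0 1 * F 2 3 - F 0 2 * F 1 3 + F 0 3 * F 1 2) ^ 2

lemma fieldInvariant_nonneg (F : Fin 4 → Fin 4 → ℝ) : 0 ≤ fieldInvariant F := by
  unfold fieldInvariant
  positivity

lemma mink_energyCurrent_self (F : Fin 4 → Fin 4 → ℝ) (hF : ∀ a b, F a b = - F b a)
    (X : Fin 4 → ℝ) :
    mink (energyCurrent F X) (energyCurrent F X) = fieldInvariant F * mink X X := by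
  have hd : ∀ a, F a a = 0 := fun a => by linarith [hF a a]
  simp only [energyCurrent, mink, Qt, starF_eq F hF, η, Fin.sum_univ_four, Matrix.of_apply,
    Matrix.cons_val, Fin.isValue, Fin.reduceEq, ↓reduceIte, hd, hF 1 0, hF 2 0, hF 3 0, hF 2 1,
    hF 3 1, hF 3 2, fieldInvariant]
  ring

lemma mink_energyCurrent_self_nonpos (F : Fin 4 → Fin 4 → ℝ) (hF : ∀ a b, F a b = - F b a)
    {X : Fin 4 → ℝ} (hX : mink X X ≤ 0) :
    mink (energyCurrent F X) (energyCurrent F X) ≤ 0 := by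
  rw [mink_energyCurrent_self F hF]
  exact mul_nonpos_of_nonneg_of_nonpos (fieldInvariant_nonneg F) hX

lemma energyCurrent_zero_nonneg (F : Fin 4 → Fin 4 → ℝ) (hF : ∀ a b, F a b = - F b a)
    {X : Fin 4 → ℝ} (hX : mink X X ≤ 0) (hX0 : 0 ≤ X 0) : 0 ≤ energyCurrent F X 0 := by
  have hJ : mink (energyCurrent F e₀) (energyCurrent F e₀) ≤ 0 :=
    mink_energyCurrent_self_nonpos F hF (by rw [mink_e₀_self]; norm_num)
  have hJ0 : 0 ≤ energyCurrent F e₀ 0 := by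
    rw [energyCurrent_zero, Qtvec_e₀_e₀ F hF]
    positivity
  have := mink_nonpos_of_causal hJ hX hJ0 hX0
  rw [mink_energyCurrent, ← Qtvec_comm] at this
  rw [energyCurrent_zero]
  linarith

theorem Qtvec_nonneg_of_causal (F : Fin 4 → Fin 4 → ℝ) (hF : ∀ a b, F a b = - F b a)
    {X Y : Fin 4 → ℝ} (hX : mink X X ≤ 0) (hX0 : 0 ≤ X 0) (hY : mink Y Y ≤ 0) (hY0 : 0 ≤ Y 0) :
    0 ≤ Qtvec F X Y := by
  have := mink_nonpos_of_causal (mink_energyCurrent_self_nonpos F hF hX) hY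
    (energyCurrent_zero_nonneg F hF hX hX0) hY0
  rw [mink_energyCurrent] at this
  linarith

lemma mul_Qtvec_e₀_le (F : Fin 4 → Fin 4 → ℝ) (hF : ∀ a b, F a b = - F b a)
    {X Y : Fin 4 → ℝ} (hX : mink X X ≤ 0) (hX0 : 0 < X 0) (hY : mink Y Y ≤ 0) (hY0 : 0 ≤ Y 0) :
    -mink X X / (2 * X 0) * Qtvec F e₀ Y ≤ Qtvec F X Y := by
  set s := -mink X X / (2 * X 0) with hs
  have hsX : 2 * s * X 0 = -mink X X := by
    rw [hs]
    field_simp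
  have hs0 : 0 ≤ s := div_nonneg (neg_nonneg.2 hX) (by positivity)
  have hX' : mink (X - s • e₀) (X - s • e₀) ≤ 0 := by
    rw [mink_sub_smul_e₀_self]
    nlinarith
  have hX0' : 0 ≤ (X - s • e₀) 0 := by
    have hmX : -mink X X ≤ X 0 ^ 2 := by
      rw [mink_apply]
      nlinarith [sq_nonneg (X 1), sq_nonneg (X 2), sq_nonneg (X 3)]
    have hcomp : (X - s • e₀) 0 = X 0 - s := by simp [e₀]
    rw [hcomp]
    nlinarith
  have := Qtvec_nonneg_of_causal F hF hX' hX0' hY hY0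
  calc s * Qtvec F e₀ Y ≤ Qtvec F (X - s • e₀) Y + s * Qtvec F e₀ Y := by linarith
    _ = Qtvec F X Y := by rw [← Qtvec_smul_left, ← Qtvec_add_left, sub_add_cancel]

/-- **Positivity and coercivity of the Maxwell energy–momentum tensor**
(used for the boundary terms in the spin-1 energy identities of section 11.1
of the paper): `Q̃[F](X,Y) ≥ 0` for future-directed causal `X, Y`, and for
future-directed timelike `X, Y` there is `c > 0` (depending only on `X, Y`)
with `Q̃[F'](X,Y) ≥ c·Σ_{αβ}(F'_{αβ})²` for every antisymmetric `F'`. -/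
theorem maxwell_energy_momentum_positive (F : Fin 4 → Fin 4 → ℝ)
    (hF : ∀ a b, F a b = - F b a) :
    (∀ X Y : Fin 4 → ℝ, FutureCausal X → FutureCausal Y →
      0 ≤ Qtvec F X Y) ∧
    (∀ X Y : Fin 4 → ℝ, FutureTimelike X → FutureTimelike Y →
      ∃ c > (0 : ℝ), ∀ F' : Fin 4 → Fin 4 → ℝ, (∀ a b, F' a b = - F' b a) →
        c * (∑ a : Fin 4, ∑ b : Fin 4, (F' a b) ^ 2) ≤ Qtvec F' X Y) := by
  refine ⟨fun X Y hX hY => Qtvec_nonneg_of_causal F hF hX.1 hX.2.le hY.1 hY.2.le, ?_⟩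
  rintro X Y ⟨hX, hX0⟩ ⟨hY, hY0⟩
  have hs : 0 < -mink X X / (2 * X 0) := div_pos (neg_pos.2 hX) (by positivity)
  have ht : 0 < -mink Y Y / (2 * Y 0) := div_pos (neg_pos.2 hY) (by positivity)
  refine ⟨-mink X X / (2 * X 0) * (-mink Y Y / (2 * Y 0)) / 2, by positivity, fun F' hF' => ?_⟩
  have he₀ : mink e₀ e₀ ≤ 0 := by rw [mink_e₀_self]; norm_num
  calc _ = -mink X X / (2 * X 0) * (-mink Y Y / (2 * Y 0) * Qtvec F' e₀ e₀) := by
        rw [Qtvec_e₀_e₀ F' hF']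
        ring
    _ ≤ -mink X X / (2 * X 0) * Qtvec F' e₀ Y := by
        rw [Qtvec_comm F' e₀ Y]
        exact mul_le_mul_of_nonneg_left (mul_Qtvec_e₀_le F' hF' hY.le hY0 he₀ (by simp [e₀])) hs.le
    _ ≤ Qtvec F' X Y := mul_Qtvec_e₀_le F' hF' hX.le hX0 hY.le hY0.le

end

end Paper
end

section
/- Let F be an antisymmetric bilinear form on Minkowski space with energy–momentum tensor Q̃[F]_{αβ} = F_{αγ}·F_β^{γ} + (⋆F)_{αγ}·(⋆F)_β^{γ}, and let (e₁, e₂, e₃, e₄) be a positively oriented null frame. Then Q̃[F](e₃,e₃) = 2·Σ_A F(e_A,e₃)², Q̃[F](e₄,e₄) = 2·Σ_A F(e_A,e₄)², and Q̃[F](e₃,e₄) = (1/2)·F(e₃,e₄)² + 2·F(e₁,e₂)², where A ranges over {1,2}. -/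
open scoped BigOperators

namespace Paper

noncomputable section

/-- A Weyl tensor evaluated on four vectors. -/
def Wvec (W : Tensor4) (X Y Z N : Fin 4 → ℝ) : ℝ :=
  ∑ a : Fin 4, ∑ b : Fin 4, ∑ c : Fin 4, ∑ d : Fin 4,
    W a b c d * X a * Y b * Z c * N d

/-- The Levi-Civita tensor evaluated on four vectors. -/
def εvec (X Y Z N : Fin 4 → ℝ) : ℝ :=
  ∑ a : Fin 4, ∑ b : Fin 4, ∑ c : Fin 4, ∑ d : Fin 4,
    ε a b c d * X a * Y b * Z c * N d

/-- A positively oriented null frame `(e₁, e₂, e₃, e₄)`: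
`η(e_A,e_B) = δ_{AB}` for `A, B ∈ {1,2}`, `e₃, e₄` null with
`η(e₃,e₄) = −2`, orthogonal to `e₁, e₂`, and `ε(e₁,e₂,e₃,e₄) = 2`. -/
def IsNullFrame (e1 e2 e3 e4 : Fin 4 → ℝ) : Prop :=
  mink e1 e1 = 1 ∧ mink e2 e2 = 1 ∧ mink e1 e2 = 0 ∧
  mink e3 e3 = 0 ∧ mink e4 e4 = 0 ∧ mink e3 e4 = -2 ∧
  mink e1 e3 = 0 ∧ mink e1 e4 = 0 ∧ mink e2 e3 = 0 ∧ mink e2 e4 = 0 ∧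
  εvec e1 e2 e3 e4 = 2

/-- An antisymmetric bilinear form evaluated on two vectors. -/
def Fvec (F : Fin 4 → Fin 4 → ℝ) (X Y : Fin 4 → ℝ) : ℝ :=
  ∑ a : Fin 4, ∑ b : Fin 4, F a b * X a * Y b

/-! Let `E` be the matrix whose rows are the frame vectors. The frame relations say
`E η Eᵀ = G` for the Gram matrix `G` of a null frame, so `η⁻¹ = Eᵀ G⁻¹ E`; and since `ε` is a
volume form, conjugating a Hodge dual by `E` multiplies it by `det E = ε(e₁,e₂,e₃,e₄) = 2`.
Hence in frame components `Q̃ = f G⁻¹ fᵀ + s G⁻¹ sᵀ` with `f = E F Eᵀ` and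
`s = 2 ⋆(G⁻¹ f G⁻¹)`, and the three identities become polynomial identities in the six
entries of the antisymmetric matrix `f`. -/

open Matrix

lemma det_fin_four {R : Type*} [CommRing R] (A : Matrix (Fin 4) (Fin 4) R) :
    A.det =
      A 0 0 * A 1 1 * A 2 2 * A 3 3 - A 0 0 * A 1 1 * A 2 3 * A 3 2
      - A 0 0 * A 1 2 * A 2 1 * A 3 3 + A 0 0 * A 1 2 * A 2 3 * A 3 1
      + A 0 0 * A 1 3 * A 2 1 * A 3 2 - A 0 0 * A 1 3 * A 2 2 * A 3 1
      - A 0 1 * A 1 0 * A 2 2 * A 3 3 + A 0 1 * A 1 0 * A 2 3 * A 3 2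
      + A 0 1 * A 1 2 * A 2 0 * A 3 3 - A 0 1 * A 1 2 * A 2 3 * A 3 0
      - A 0 1 * A 1 3 * A 2 0 * A 3 2 + A 0 1 * A 1 3 * A 2 2 * A 3 0
      + A 0 2 * A 1 0 * A 2 1 * A 3 3 - A 0 2 * A 1 0 * A 2 3 * A 3 1
      - A 0 2 * A 1 1 * A 2 0 * A 3 3 + A 0 2 * A 1 1 * A 2 3 * A 3 0
      + A 0 2 * A 1 3 * A 2 0 * A 3 1 - A 0 2 * A 1 3 * A 2 1 * A 3 0
      - A 0 3 * A 1 0 * A 2 1 * A 3 2 + A 0 3 * A 1 0 * A 2 2 * A 3 1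
      + A 0 3 * A 1 1 * A 2 0 * A 3 2 - A 0 3 * A 1 1 * A 2 2 * A 3 0
      - A 0 3 * A 1 2 * A 2 0 * A 3 1 + A 0 3 * A 1 2 * A 2 1 * A 3 0 := by
  rw [det_succ_row_zero]
  simp [Fin.sum_univ_four, det_fin_three, Fin.succAbove]
  ring

lemma transpose_mul_mul_eq_of_mul_mul_transpose_eq {n R : Type*} [Fintype n] [DecidableEq n]
    [CommRing R] {E H H' G G' : Matrix n n R} (hG : E * H * Eᵀ = G) (hGG' : G * G' = 1)
    (hHH' : H' * H = 1) : Eᵀ * G' * E = H' := by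
  have hright : E * (H * Eᵀ * G') = 1 := by simp only [← Matrix.mul_assoc, hG, hGG']
  calc Eᵀ * G' * E = H' * (H * Eᵀ * G' * E) := by simp only [← Matrix.mul_assoc, hHH', one_mul]
    _ = H' := by rw [mul_eq_one_comm.mp hright, mul_one]

lemma mul_mul_transpose_apply (E B : Matrix (Fin 4) (Fin 4) ℝ) (i j : Fin 4) :
    (E * B * Eᵀ) i j = Fvec B (E i) (E j) := by
  simp only [mul_apply, transpose_apply, Fvec, Finset.sum_mul]
  rw [Finset.sum_comm]
  exact Finset.sum_congr rfl fun _ _ => Finset.sum_congr rfl fun _ _ => by ring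

lemma Fvec_eq_neg_swap (F : Fin 4 → Fin 4 → ℝ) (hF : ∀ a b, F a b = - F b a) (X Y : Fin 4 → ℝ) :
    Fvec F X Y = - Fvec F Y X := by
  simp only [Fvec, ← Finset.sum_neg_distrib]
  rw [Finset.sum_comm]
  exact Finset.sum_congr rfl fun a _ => Finset.sum_congr rfl fun b _ => by rw [hF a b]; ring

lemma mink_comm (X Y : Fin 4 → ℝ) : mink X Y = mink Y X := by
  simp [mink, Fin.sum_univ_four, η]
  ring

lemma εvec_eq_det (X Y Z W : Fin 4 → ℝ) : εvec X Y Z W = (of ![X, Y, Z, W]).det := by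
  rw [det_fin_four]
  simp [εvec, Fin.sum_univ_four, ε]
  ring

lemma εvec_single (a b c d : Fin 4) :
    εvec (Pi.single a 1) (Pi.single b 1) (Pi.single c 1) (Pi.single d 1) = ε a b c d := by
  simp [εvec, Pi.single_apply]

lemma εvec_vecMul (E : Matrix (Fin 4) (Fin 4) ℝ) (X Y Z W : Fin 4 → ℝ) :
    εvec (X ᵥ* E) (Y ᵥ* E) (Z ᵥ* E) (W ᵥ* E) = εvec X Y Z W * E.det := by
  rw [εvec_eq_det, εvec_eq_det, ← det_mul]
  congr 1
  ext i j
  fin_cases i <;> simp [mul_apply, vecMul, dotProduct]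

lemma εvec_rows (E : Matrix (Fin 4) (Fin 4) ℝ) (a b c d : Fin 4) :
    εvec (E a) (E b) (E c) (E d) = ε a b c d * E.det := by
  have h := εvec_vecMul E (Pi.single a 1) (Pi.single b 1) (Pi.single c 1) (Pi.single d 1)
  simp only [single_one_vecMul, εvec_single] at h
  exact h

def hodgeDual (M : Matrix (Fin 4) (Fin 4) ℝ) : Matrix (Fin 4) (Fin 4) ℝ :=
  of fun a b => (1 / 2) * ∑ c, ∑ d, ε a b c d * M c d

lemma hodgeDual_eq (M : Matrix (Fin 4) (Fin 4) ℝ) :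
    hodgeDual M = (1 / 2 : ℝ) •
      !![0, M 2 3 - M 3 2, M 3 1 - M 1 3, M 1 2 - M 2 1;
         M 3 2 - M 2 3, 0, M 0 3 - M 3 0, M 2 0 - M 0 2;
         M 1 3 - M 3 1, M 3 0 - M 0 3, 0, M 0 1 - M 1 0;
         M 2 1 - M 1 2, M 0 2 - M 2 0, M 1 0 - M 0 1, 0] := by
  ext a b
  fin_cases a <;> fin_cases b <;> simp [hodgeDual, Fin.sum_univ_four, ε] <;> ring

lemma Fvec_hodgeDual_transpose_mul_mul (E g : Matrix (Fin 4) (Fin 4) ℝ) (X Y : Fin 4 → ℝ) :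
    Fvec (hodgeDual (Eᵀ * g * E)) X Y = (1 / 2) * ∑ c, ∑ d, g c d * εvec X Y (E c) (E d) := by
  simp only [εvec_eq_det, det_fin_four]
  simp [hodgeDual_eq, Fvec, Fin.sum_univ_four, mul_apply]
  ring

lemma mul_hodgeDual_mul_transpose (E g : Matrix (Fin 4) (Fin 4) ℝ) :
    E * hodgeDual (Eᵀ * g * E) * Eᵀ = E.det • hodgeDual g := by
  ext a b
  rw [mul_mul_transpose_apply, Fvec_hodgeDual_transpose_mul_mul, Matrix.smul_apply, hodgeDual,
    of_apply]
  simp only [εvec_rows, smul_eq_mul, Finset.mul_sum]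
  exact Finset.sum_congr rfl fun _ _ => Finset.sum_congr rfl fun _ _ => by ring

def minkowskiMatrix : Matrix (Fin 4) (Fin 4) ℝ := of η

lemma minkowskiMatrix_mul_self : minkowskiMatrix * minkowskiMatrix = 1 := by
  ext a b
  fin_cases a <;> fin_cases b <;> simp [minkowskiMatrix, η, mul_apply]

lemma of_starF (F : Fin 4 → Fin 4 → ℝ) :
    of (starF F) = hodgeDual (minkowskiMatrix * of F * minkowskiMatrix) := by
  ext a b
  simp [starF, hodgeDual, minkowskiMatrix, η, mul_apply, Fin.sum_univ_four]

def energyMomentum (ginv f s : Matrix (Fin 4) (Fin 4) ℝ) : Matrix (Fin 4) (Fin 4) ℝ :=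
  f * ginv * fᵀ + s * ginv * sᵀ

lemma of_Qt (F : Fin 4 → Fin 4 → ℝ) :
    of (Qt F) = energyMomentum minkowskiMatrix (of F) (of (starF F)) := by
  ext a b
  simp [Qt, energyMomentum, minkowskiMatrix, η, mul_apply, Fin.sum_univ_four]
  ring

lemma mul_energyMomentum_mul_transpose (E ginv f s : Matrix (Fin 4) (Fin 4) ℝ) :
    E * energyMomentum (Eᵀ * ginv * E) f s * Eᵀ =
      energyMomentum ginv (E * f * Eᵀ) (E * s * Eᵀ) := by
  simp only [energyMomentum, Matrix.mul_add, Matrix.add_mul, transpose_mul, transpose_transpose,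
    Matrix.mul_assoc]

def frameMatrix (e1 e2 e3 e4 : Fin 4 → ℝ) : Matrix (Fin 4) (Fin 4) ℝ := of ![e1, e2, e3, e4]

def nullFrameGram : Matrix (Fin 4) (Fin 4) ℝ :=
  !![1, 0, 0, 0; 0, 1, 0, 0; 0, 0, 0, -2; 0, 0, -2, 0]

def nullFrameGramInv : Matrix (Fin 4) (Fin 4) ℝ :=
  !![1, 0, 0, 0; 0, 1, 0, 0; 0, 0, 0, -1 / 2; 0, 0, -1 / 2, 0]

lemma nullFrameGram_mul_inv : nullFrameGram * nullFrameGramInv = 1 := by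
  ext a b
  fin_cases a <;> fin_cases b <;>
    simp [nullFrameGram, nullFrameGramInv, mul_apply, Fin.sum_univ_four] <;> norm_num

namespace IsNullFrame

variable {e1 e2 e3 e4 : Fin 4 → ℝ}

lemma gram (h : IsNullFrame e1 e2 e3 e4) :
    frameMatrix e1 e2 e3 e4 * minkowskiMatrix * (frameMatrix e1 e2 e3 e4)ᵀ = nullFrameGram := by
  obtain ⟨h11, h22, h12, h33, h44, h34, h13, h14, h23, h24, -⟩ := h
  ext i j
  rw [mul_mul_transpose_apply]
  change mink (![e1, e2, e3, e4] i) (![e1, e2, e3, e4] j) = _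
  fin_cases i <;> fin_cases j <;>
    simp [nullFrameGram, mink_comm e2 e1, mink_comm e3 e1, mink_comm e4 e1,
      mink_comm e3 e2, mink_comm e4 e2, mink_comm e4 e3, *]

lemma det_frameMatrix (h : IsNullFrame e1 e2 e3 e4) : (frameMatrix e1 e2 e3 e4).det = 2 := by
  obtain ⟨-, -, -, -, -, -, -, -, -, -, hε⟩ := h
  rwa [frameMatrix, ← εvec_eq_det]

end IsNullFrame

lemma energyMomentum_nullFrame_apply (f : Matrix (Fin 4) (Fin 4) ℝ) (hf : ∀ i j, f i j = - f j i) :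
    let T := energyMomentum nullFrameGramInv f
      ((2 : ℝ) • hodgeDual (nullFrameGramInv * f * nullFrameGramInv))
    T 2 2 = 2 * (f 0 2 ^ 2 + f 1 2 ^ 2) ∧ T 3 3 = 2 * (f 0 3 ^ 2 + f 1 3 ^ 2) ∧
      T 2 3 = 1 / 2 * f 2 3 ^ 2 + 2 * f 0 1 ^ 2 := by
  have hdiag : ∀ i, f i i = 0 := fun i => by linarith [hf i i]
  simp only [energyMomentum, Matrix.add_apply, mul_apply, transpose_apply, Matrix.smul_apply,
    Fin.sum_univ_four, hodgeDual_eq]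
  simp [nullFrameGramInv, hdiag, hf 1 0, hf 2 0, hf 3 0, hf 2 1, hf 3 1, hf 3 2]
  exact ⟨by ring, by ring, by ring⟩

/-- **Null components of the Maxwell energy–momentum tensor** (section 11.1
of the paper): relative to a positively oriented null frame `(e₁,e₂,e₃,e₄)`,
`Q̃[F](e₃,e₃) = 2·Σ_A F(e_A,e₃)²`, `Q̃[F](e₄,e₄) = 2·Σ_A F(e_A,e₄)²`, and
`Q̃[F](e₃,e₄) = (1/2)·F(e₃,e₄)² + 2·F(e₁,e₂)²`. -/
theorem maxwell_energy_momentum_null_components (F : Fin 4 → Fin 4 → ℝ)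
    (hF : ∀ a b, F a b = - F b a)
    (e1 e2 e3 e4 : Fin 4 → ℝ) (hframe : IsNullFrame e1 e2 e3 e4) :
    (Qtvec F e3 e3 = 2 * ((Fvec F e1 e3) ^ 2 + (Fvec F e2 e3) ^ 2)) ∧
    (Qtvec F e4 e4 = 2 * ((Fvec F e1 e4) ^ 2 + (Fvec F e2 e4) ^ 2)) ∧
    (Qtvec F e3 e4 = (1 / 2) * (Fvec F e3 e4) ^ 2 + 2 * (Fvec F e1 e2) ^ 2) := by
  set E := frameMatrix e1 e2 e3 e4
  set f := E * of F * Eᵀ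
  have hH : Eᵀ * nullFrameGramInv * E = minkowskiMatrix :=
    transpose_mul_mul_eq_of_mul_mul_transpose_eq hframe.gram nullFrameGram_mul_inv
      minkowskiMatrix_mul_self
  have hstar : E * of (starF F) * Eᵀ =
      (2 : ℝ) • hodgeDual (nullFrameGramInv * f * nullFrameGramInv) := by
    rw [of_starF, ← hH, ← hframe.det_frameMatrix, ← mul_hodgeDual_mul_transpose]
    simp only [E, f, Matrix.mul_assoc]
  have hQ : E * of (Qt F) * Eᵀ = energyMomentum nullFrameGramInv f
      ((2 : ℝ) • hodgeDual (nullFrameGramInv * f * nullFrameGramInv)) := by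
    rw [of_Qt, ← hH, mul_energyMomentum_mul_transpose, hstar]
  have hf : ∀ i j, f i j = - f j i := fun i j => by
    simp only [f, mul_mul_transpose_apply]
    exact Fvec_eq_neg_swap F hF _ _
  obtain ⟨h33, h44, h34⟩ := energyMomentum_nullFrame_apply f hf
  simp only [← hQ, f, mul_mul_transpose_apply] at h33 h44 h34
  exact ⟨h33, h44, h34⟩

end

end Paper
end
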